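/- In the OCO-with-memory setting with constants D, G_f, L, H as above, choosing η = D / √(G_f(G_f + L H²) T) gives policy regret Σ_{t=H}^T f_t(x_{t-H},…,x_t) - min_{x∈𝒦} Σ_{t=H}^T f_t(x,…,x) ≤ 3 D √(G_f (G_f + L H²) T). -/

import Mathlib

/-! Convexity and the obtuse-angle property of the nearest-point map give the usual per-round
bound of projected gradient descent, `f̃ₜ(xₜ) - f̃ₜ(x⋆) ≤ (‖xₜ - x⋆‖² - ‖xₜ₊₁ - x⋆‖²)/(2η) + ηG²/2`,
which telescopes to `D²/(2η) + TηG²`. Each step moves the iterate by at most `ηG`, so every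
coordinate of the window `(x_{t-H}, …, xₜ)` lies within `HηG` of `xₜ`, and coordinate-wise Lipschitz
continuity bounds the price of memory by `L(H+1)HηG` per round. For `η = D/√S` with
`S = G(G+LH²)T` one has `D²/η = ηS = D√S`, whence the constant `3`. -/

open RealInnerProductSpace Finset

section InnerProductSpace
variable {E : Type*} [NormedAddCommGroup E] [InnerProductSpace ℝ E]

theorem norm_sub_le_of_isMinOn_norm_sub {K : Set E} (hK : Convex ℝ K) {y p z : E} (hp : p ∈ K)
    (hmin : IsMinOn (‖· - y‖) K p) (hz : z ∈ K) : ‖p - z‖ ≤ ‖y - z‖ := by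
  have hinf : ‖y - p‖ = ⨅ w : K, ‖y - w‖ := by
    have : Nonempty K := ⟨⟨p, hp⟩⟩
    refine le_antisymm (le_ciInf fun w => ?_) (ciInf_le ⟨0, ?_⟩ (⟨p, hp⟩ : K))
    · simpa only [norm_sub_rev y] using isMinOn_iff.1 hmin w w.2
    · rintro _ ⟨w, rfl⟩; positivity
  have hobtuse : ⟪y - p, z - p⟫ ≤ 0 := (norm_eq_iInf_iff_real_inner_le_zero hK hp).1 hinf z hz
  have hsq : ‖y - z‖ ^ 2 = ‖y - p‖ ^ 2 - 2 * ⟪y - p, z - p⟫ + ‖p - z‖ ^ 2 := by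
    rw [show y - z = (y - p) - (z - p) by abel, norm_sub_sq_real, norm_sub_rev z]
  nlinarith [norm_nonneg (p - z), norm_nonneg (y - z), sq_nonneg ‖y - p‖]

theorem ConvexOn.inner_gradient_sub_le [CompleteSpace E] {s : Set E} {g : E → ℝ}
    (hg : ConvexOn ℝ s g) {x y : E} (hx : x ∈ s) (hy : y ∈ s) (hd : DifferentiableAt ℝ g x) :
    ⟪gradient g x, y - x⟫ ≤ g y - g x := by
  have hline : HasDerivAt (g ∘ AffineMap.lineMap (k := ℝ) x y) ⟪gradient g x, y - x⟫ 0 := by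
    have hg' : HasFDerivAt g (InnerProductSpace.toDual ℝ E (gradient g x))
        (AffineMap.lineMap (k := ℝ) x y 0) := by
      simpa using hd.hasGradientAt.hasFDerivAt
    simpa using hg'.comp_hasDerivAt (0 : ℝ) (AffineMap.hasDerivAt_lineMap (a := x) (b := y))
  simpa [slope_def_field] using (hg.comp_affineMap (AffineMap.lineMap x y)).le_slope_of_hasDerivAt
    (x := 0) (y := 1) (by simpa using hx) (by simpa using hy) one_pos hline

theorem ConvexOn.sub_le_of_isMinOn_norm_sub_gradient [CompleteSpace E] {K : Set E} {g : E → ℝ}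
    (hg : ConvexOn ℝ K g) {x y p : E} {η G : ℝ} (hx : x ∈ K) (hy : y ∈ K)
    (hd : DifferentiableAt ℝ g x) (hG : ‖gradient g x‖ ≤ G) (hη : 0 < η) (hp : p ∈ K)
    (hmin : IsMinOn (‖· - (x - η • gradient g x)‖) K p) :
    g x - g y ≤ (‖x - y‖ ^ 2 - ‖p - y‖ ^ 2) / (2 * η) + η / 2 * G ^ 2 := by
  set v := gradient g x
  have hlin : ⟪v, y - x⟫ ≤ g y - g x := hg.inner_gradient_sub_le hx hy hd
  have hproj : ‖p - y‖ ≤ ‖x - η • v - y‖ := norm_sub_le_of_isMinOn_norm_sub hg.1 hp hmin hy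
  have hexpand : ‖x - η • v - y‖ ^ 2 = ‖x - y‖ ^ 2 + 2 * η * ⟪v, y - x⟫ + η ^ 2 * ‖v‖ ^ 2 := by
    rw [show x - η • v - y = (x - y) - η • v by abel, norm_sub_sq_real, inner_smul_right,
      norm_smul, Real.norm_of_nonneg hη.le, real_inner_comm, ← neg_sub y x, inner_neg_right]
    ring
  have hv : ‖v‖ ^ 2 ≤ G ^ 2 := pow_le_pow_left₀ (norm_nonneg v) hG 2
  rw [div_add' _ _ _ (by positivity), le_div_iff₀ (by positivity)]
  nlinarith [pow_le_pow_left₀ (norm_nonneg _) hproj 2]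

end InnerProductSpace

section Memory
variable {E : Type*} [SeminormedAddCommGroup E]

def CoordLipschitzOn {ι : Type*} [DecidableEq ι] (L : ℝ) (K : Set E) (F : (ι → E) → ℝ) : Prop :=
  ∀ (v : ι → E) (j : ι) (y : E), (∀ i, v i ∈ K) → y ∈ K →
    |F v - F (Function.update v j y)| ≤ L * ‖v j - y‖

theorem CoordLipschitzOn.sub_le {ι : Type*} [Fintype ι] [DecidableEq ι] {L : ℝ} {K : Set E}
    {F : (ι → E) → ℝ} (hF : CoordLipschitzOn L K F) {v w : ι → E} (hv : ∀ i, v i ∈ K)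
    (hw : ∀ i, w i ∈ K) : F v - F w ≤ L * ∑ i, ‖v i - w i‖ := by
  have hpartial : ∀ s : Finset ι, F v - F (s.piecewise w v) ≤ L * ∑ i ∈ s, ‖v i - w i‖ := by
    intro s
    induction s using Finset.induction_on with
    | empty => simp
    | insert j s hj ih =>
      have hmem : ∀ i, s.piecewise w v i ∈ K := fun i => by
        by_cases hi : i ∈ s <;> simp [hi, hv, hw]
      have hupdate := hF _ j (w j) hmem (hw j)
      rw [Finset.piecewise_eq_of_notMem _ _ _ hj] at hupdate
      rw [Finset.piecewise_insert, Finset.sum_insert hj, mul_add]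
      linarith [(abs_le.mp hupdate).2]
  simpa using hpartial univ

theorem norm_sub_le_of_norm_succ_sub_le {x : ℕ → E} {c : ℝ} (hstep : ∀ t, ‖x (t + 1) - x t‖ ≤ c)
    {m n : ℕ} (hmn : m ≤ n) : ‖x m - x n‖ ≤ (n - m : ℕ) * c := by
  have h := dist_le_Ico_sum_of_dist_le (f := x) hmn (d := fun _ => c) fun _ _ => by
    rw [dist_comm, dist_eq_norm]; exact hstep _
  simpa [dist_eq_norm] using h

theorem CoordLipschitzOn.window_sub_le {H : ℕ} {L c : ℝ} {K : Set E}
    {F : (Fin (H + 1) → E) → ℝ} (hF : CoordLipschitzOn L K F) (hL : 0 ≤ L) {x : ℕ → E}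
    (hxK : ∀ t, x t ∈ K) (hstep : ∀ t, ‖x (t + 1) - x t‖ ≤ c) {t : ℕ} (hHt : H ≤ t) :
    F (fun j : Fin (H + 1) => x (t - H + j)) - F (fun _ => x t) ≤ (H + 1) * H * (L * c) := by
  have hc : 0 ≤ c := (norm_nonneg _).trans (hstep 0)
  have hdrift (j : Fin (H + 1)) : ‖x (t - H + j) - x t‖ ≤ H * c := by
    refine (norm_sub_le_of_norm_succ_sub_le hstep (by omega)).trans ?_
    gcongr
    exact_mod_cast (by omega : t - (t - H + j) ≤ H)
  calc _ ≤ L * ∑ j : Fin (H + 1), ‖x (t - H + j) - x t‖ :=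
        hF.sub_le (fun _ => hxK _) (fun _ => hxK t)
    _ ≤ L * ∑ _j : Fin (H + 1), H * c := by gcongr with j; exact hdrift j
    _ = (H + 1) * H * (L * c) := by
      rw [sum_const, card_univ, Fintype.card_fin, nsmul_eq_mul]; push_cast; ring

end Memory

theorem sum_Icc_le_of_le_sub_succ {a φ : ℕ → ℝ} {B b c : ℝ} (hc : 0 < c)
    (hφ0 : ∀ t, 0 ≤ φ t) (hφB : ∀ t, φ t ≤ B) (ha : ∀ t, a t ≤ (φ t - φ (t + 1)) / c + b)
    (m n : ℕ) : ∑ t ∈ Icc m n, a t ≤ B / c + #(Icc m n) * b := by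
  have htele : ∑ t ∈ Icc m n, (φ t - φ (t + 1)) ≤ B := by
    rcases le_or_gt m n with hmn | hnm
    · calc ∑ t ∈ Icc m n, (φ t - φ (t + 1)) = -∑ t ∈ Icc m n, (φ (t + 1) - φ t) := by
            rw [← sum_neg_distrib]; simp only [neg_sub]
        _ = φ m - φ (n + 1) := by rw [sum_Icc_sub hmn]; ring
        _ ≤ B := by linarith [hφ0 (n + 1), hφB m]
    · rw [Icc_eq_empty_of_lt hnm, sum_empty]; exact (hφ0 0).trans (hφB 0)
  calc ∑ t ∈ Icc m n, a t ≤ ∑ t ∈ Icc m n, ((φ t - φ (t + 1)) / c + b) := sum_le_sum fun t _ => ha t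
    _ = (∑ t ∈ Icc m n, (φ t - φ (t + 1))) / c + #(Icc m n) * b := by
      rw [sum_add_distrib, ← sum_div, sum_const, nsmul_eq_mul]
    _ ≤ B / c + #(Icc m n) * b := by gcongr

theorem add_le_three_mul_sqrt_of_eq_div_sqrt {D G L η : ℝ} {H T N : ℕ} (hD : 0 < D) (hG : 0 < G)
    (hL : 0 ≤ L) (hT : 0 < T) (hN : N ≤ T + 1 - H)
    (hη : η = D / √(G * (G + L * H ^ 2) * T)) :
    N * ((H + 1) * H * (L * (η * G))) + (D ^ 2 / (2 * η) + N * (η / 2 * G ^ 2)) ≤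
      3 * D * √(G * (G + L * H ^ 2) * T) := by
  set S := G * (G + L * H ^ 2) * T
  have hS : 0 < S := by positivity
  have hsqrt : 0 < √S := Real.sqrt_pos.2 hS
  have hη0 : 0 < η := hη ▸ div_pos hD hsqrt
  have hηS : η * S = D * √S := by
    calc η * S = η * √S * √S := by rw [mul_assoc, Real.mul_self_sqrt hS.le]
      _ = D * √S := by rw [hη, div_mul_cancel₀ _ hsqrt.ne']
  have hDη : D ^ 2 / (2 * η) = D * √S / 2 := by
    rw [hη]; field_simp
  have hN2 : (N : ℝ) ≤ 2 * T := by
    have : N ≤ 2 * T := by omega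
    exact_mod_cast this
  have hNH : (N : ℝ) * ((H + 1) * H) ≤ 2 * T * H ^ 2 := by
    have : N * ((H + 1) * H) ≤ 2 * T * H ^ 2 := by
      rcases Nat.eq_zero_or_pos H with rfl | hH
      · simp
      · calc N * ((H + 1) * H) ≤ T * ((2 * H) * H) := by gcongr <;> omega
          _ = 2 * T * H ^ 2 := by ring
    exact_mod_cast this
  have hmemory : N * ((H + 1) * H * (L * (η * G))) ≤ 2 * T * H ^ 2 * (L * (η * G)) := by
    rw [← mul_assoc]; gcongr
  have hunary : N * (η / 2 * G ^ 2) ≤ T * (η * G ^ 2) := by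
    nlinarith [mul_pos hη0 (pow_pos hG 2)]
  nlinarith [mul_pos hη0 (mul_pos (pow_pos hG 2) (Nat.cast_pos.2 hT))]

theorem stmt11_general (d : ℕ) (𝒦 : Set (EuclideanSpace ℝ (Fin d)))
    (H T : ℕ) (D Gf L : ℝ) (hD0 : 0 < D) (hGf : 0 < Gf) (hL : 0 ≤ L) (hT : 0 < T)
    (f : ℕ → (Fin (H + 1) → EuclideanSpace ℝ (Fin d)) → ℝ)
    (hlip : ∀ (t : ℕ) (v : Fin (H + 1) → EuclideanSpace ℝ (Fin d))
      (j : Fin (H + 1)) (xj : EuclideanSpace ℝ (Fin d)),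
      (∀ i, v i ∈ 𝒦) → xj ∈ 𝒦 →
      |f t v - f t (Function.update v j xj)| ≤ L * ‖v j - xj‖)
    (hconv : ∀ t, ConvexOn ℝ 𝒦 (fun x => f t (fun _ => x)))
    (hdiff : ∀ t x, DifferentiableAt ℝ (fun x => f t (fun _ => x)) x)
    (hG : ∀ t, ∀ x ∈ 𝒦, ‖gradient (fun x => f t (fun _ => x)) x‖ ≤ Gf)
    (hD : ∀ x ∈ 𝒦, ∀ y ∈ 𝒦, ‖x - y‖ ≤ D)
    (proj : EuclideanSpace ℝ (Fin d) → EuclideanSpace ℝ (Fin d))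
    (hprojmem : ∀ y, proj y ∈ 𝒦)
    (hproj : ∀ y, ∀ z ∈ 𝒦, ‖proj y - y‖ ≤ ‖z - y‖)
    (x : ℕ → EuclideanSpace ℝ (Fin d)) (hxmem : ∀ t, x t ∈ 𝒦)
    (hupd : ∀ t, x (t + 1) = proj (x t -
      (D / Real.sqrt (Gf * (Gf + L * (H : ℝ) ^ 2) * T)) •
        gradient (fun x => f t (fun _ => x)) (x t))) :
    ∀ xstar ∈ 𝒦,
      ∑ t ∈ Finset.Icc H T, f t (fun j : Fin (H + 1) => x (t - H + (j : ℕ))) -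
        ∑ t ∈ Finset.Icc H T, f t (fun _ => xstar) ≤
      3 * D * Real.sqrt (Gf * (Gf + L * (H : ℝ) ^ 2) * T) := by
  intro xstar hxstar
  set η := D / √(Gf * (Gf + L * (H : ℝ) ^ 2) * T) with hη
  have hη0 : 0 < η := by positivity
  have hnearest (y) : IsMinOn (‖· - y‖) 𝒦 (proj y) := isMinOn_iff.2 (hproj y)
  have hstep (t : ℕ) : ‖x (t + 1) - x t‖ ≤ η * Gf := by
    rw [hupd t]
    calc _ ≤ ‖x t - η • gradient _ (x t) - x t‖ :=
          norm_sub_le_of_isMinOn_norm_sub (hconv t).1 (hprojmem _) (hnearest _) (hxmem t)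
      _ = η * ‖gradient (fun x => f t (fun _ => x)) (x t)‖ := by simp [norm_smul, hη0.le]
      _ ≤ η * Gf := by gcongr; exact hG t _ (hxmem t)
  have hmemory : ∀ t ∈ Icc H T, f t (fun j : Fin (H + 1) => x (t - H + (j : ℕ))) -
      f t (fun _ => x t) ≤ (H + 1) * H * (L * (η * Gf)) := fun t ht =>
    CoordLipschitzOn.window_sub_le (hlip t) hL hxmem hstep (mem_Icc.1 ht).1
  have hround (t : ℕ) : f t (fun _ => x t) - f t (fun _ => xstar) ≤
      (‖x t - xstar‖ ^ 2 - ‖x (t + 1) - xstar‖ ^ 2) / (2 * η) + η / 2 * Gf ^ 2 := by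
    rw [hupd t]
    exact (hconv t).sub_le_of_isMinOn_norm_sub_gradient (hxmem t) hxstar (hdiff t _)
      (hG t _ (hxmem t)) hη0 (hprojmem _) (hnearest _)
  have hunary := sum_Icc_le_of_le_sub_succ (by positivity) (fun t => by positivity)
    (fun t => pow_le_pow_left₀ (norm_nonneg _) (hD _ (hxmem t) _ hxstar) 2) hround H T
  calc _ = ∑ t ∈ Icc H T, (f t (fun j : Fin (H + 1) => x (t - H + (j : ℕ))) - f t (fun _ => x t))
        + ∑ t ∈ Icc H T, (f t (fun _ => x t) - f t (fun _ => xstar)) := by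
        rw [← sum_add_distrib, ← sum_sub_distrib]; simp only [sub_add_sub_cancel]
    _ ≤ #(Icc H T) * ((H + 1) * H * (L * (η * Gf))) +
        (D ^ 2 / (2 * η) + #(Icc H T) * (η / 2 * Gf ^ 2)) := by
        gcongr
        simpa using sum_le_card_nsmul _ _ _ hmemory
    _ ≤ _ := add_le_three_mul_sqrt_of_eq_div_sqrt hD0 hGf hL hT (Nat.card_Icc H T).le hη

/-- OCO-with-memory with the tuned step size `η = D/√(G_f(G_f+LH²)T)` achieves
policy regret at most `3D√(G_f(G_f+LH²)T)`. -/
theorem stmt11 (d : ℕ) (𝒦 : Set (EuclideanSpace ℝ (Fin d)))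
    (hconvK : Convex ℝ 𝒦) (hcompK : IsCompact 𝒦)
    (H T : ℕ) (D Gf L : ℝ) (hD0 : 0 < D) (hGf : 0 < Gf) (hL : 0 ≤ L) (hT : 0 < T)
    (f : ℕ → (Fin (H + 1) → EuclideanSpace ℝ (Fin d)) → ℝ)
    (hlip : ∀ (t : ℕ) (v : Fin (H + 1) → EuclideanSpace ℝ (Fin d))
      (j : Fin (H + 1)) (xj : EuclideanSpace ℝ (Fin d)),
      (∀ i, v i ∈ 𝒦) → xj ∈ 𝒦 →
      |f t v - f t (Function.update v j xj)| ≤ L * ‖v j - xj‖)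
    (hconv : ∀ t, ConvexOn ℝ 𝒦 (fun x => f t (fun _ => x)))
    (hdiff : ∀ t x, DifferentiableAt ℝ (fun x => f t (fun _ => x)) x)
    (hG : ∀ t, ∀ x ∈ 𝒦, ‖gradient (fun x => f t (fun _ => x)) x‖ ≤ Gf)
    (hD : ∀ x ∈ 𝒦, ∀ y ∈ 𝒦, ‖x - y‖ ≤ D)
    (proj : EuclideanSpace ℝ (Fin d) → EuclideanSpace ℝ (Fin d))
    (hprojmem : ∀ y, proj y ∈ 𝒦)
    (hproj : ∀ y, ∀ z ∈ 𝒦, ‖proj y - y‖ ≤ ‖z - y‖)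
    (x : ℕ → EuclideanSpace ℝ (Fin d)) (hxmem : ∀ t, x t ∈ 𝒦)
    (hupd : ∀ t, x (t + 1) = proj (x t -
      (D / Real.sqrt (Gf * (Gf + L * (H : ℝ) ^ 2) * T)) •
        gradient (fun x => f t (fun _ => x)) (x t))) :
    ∀ xstar ∈ 𝒦,
      ∑ t ∈ Finset.Icc H T, f t (fun j : Fin (H + 1) => x (t - H + (j : ℕ))) -
        ∑ t ∈ Finset.Icc H T, f t (fun _ => xstar) ≤
      3 * D * Real.sqrt (Gf * (Gf + L * (H : ℝ) ^ 2) * T) :=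
  stmt11_general d 𝒦 H T D Gf L hD0 hGf hL hT f hlip hconv hdiff hG hD proj hprojmem hproj x hxmem
    hupd
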